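/- Let A ⊆ ℤ with A ≠ ∅ and Aᶜ ≠ ∅, and let n ∈ ℤ. If Mχ_A(n) > Mχ_A(n−1), then there exists a finite s ∈ ℕ such that Mχ_A(n) = A_{0,s}χ_A(n) = (1/(s+1)) Σ_{j=0}^{s} χ_A(n+j); that is, the supremum defining Mχ_A(n) is attained by a one-sided average extending only to the right. -/
import Mathlib


open Classical

/-- Discrete noncentered average `A_{r,s}f(n) = (1/(r+s+1)) ∑_{j=-r}^{s} |f(n+j)|`. -/
noncomputable def avg (f : ℤ → ℝ) (r s : ℕ) (n : ℤ) : ℝ :=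
  (1 / (r + s + 1 : ℝ)) * ∑ j ∈ Finset.Icc (-(r : ℤ)) (s : ℤ), |f (n + j)|

/-- Discrete noncentered Hardy–Littlewood maximal function `Mf(n) = sup_{r,s∈ℕ} A_{r,s}f(n)`. -/
noncomputable def M (f : ℤ → ℝ) (n : ℤ) : ℝ :=
  ⨆ r : ℕ, ⨆ s : ℕ, avg f r s n

/-- Characteristic function of `A ⊆ ℤ`. -/
noncomputable def chi (A : Set ℤ) (n : ℤ) : ℝ := if n ∈ A then 1 else 0

/-- The set of convex points `S₊f`. -/
def Splus (f : ℤ → ℝ) : Set ℤ := {n : ℤ | 2 * f n ≤ f (n + 1) + f (n - 1)}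

/-- The set of concave points `S₋f`. -/
def Sminus (f : ℤ → ℝ) : Set ℤ := (Splus f)ᶜ

/-- The left boundary `∂ₗS₋f`. -/
def bdl (f : ℤ → ℝ) : Set ℤ := {n : ℤ | n ∈ Sminus f ∧ n - 1 ∈ Splus f}

/-- The right boundary `∂ᵣS₋f`. -/
def bdr (f : ℤ → ℝ) : Set ℤ := {n : ℤ | n ∈ Sminus f ∧ n + 1 ∈ Splus f}

lemma chi_nonneg (A : Set ℤ) (m : ℤ) : 0 ≤ chi A m := by
  unfold chi; split <;> norm_num

lemma chi_le_one (A : Set ℤ) (m : ℤ) : chi A m ≤ 1 := by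
  unfold chi; split <;> norm_num

lemma abs_chi (A : Set ℤ) (m : ℤ) : |chi A m| = chi A m := abs_of_nonneg (chi_nonneg A m)

lemma avg_nonneg (f : ℤ → ℝ) (r s : ℕ) (n : ℤ) : 0 ≤ avg f r s n := by
  unfold avg
  apply mul_nonneg (by positivity)
  exact Finset.sum_nonneg fun j _ => abs_nonneg _

lemma card_Icc_int (r s : ℕ) : (Finset.Icc (-(r : ℤ)) (s : ℤ)).card = r + s + 1 := by
  rw [Int.card_Icc]
  omega

lemma avg_chi_le_one (A : Set ℤ) (r s : ℕ) (n : ℤ) : avg (chi A) r s n ≤ 1 := by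
  unfold avg
  have hsum : ∑ j ∈ Finset.Icc (-(r : ℤ)) (s : ℤ), |chi A (n + j)| ≤ (r + s + 1 : ℝ) := by
    calc ∑ j ∈ Finset.Icc (-(r : ℤ)) (s : ℤ), |chi A (n + j)|
        ≤ ∑ _j ∈ Finset.Icc (-(r : ℤ)) (s : ℤ), (1 : ℝ) :=
          Finset.sum_le_sum fun j _ => by rw [abs_chi]; exact chi_le_one A _
      _ = (r + s + 1 : ℝ) := by rw [Finset.sum_const, card_Icc_int]; push_cast; ring
  have hpos : (0 : ℝ) < (r + s + 1 : ℝ) := by positivity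
  rw [div_mul_eq_mul_div, one_mul, div_le_one hpos]
  exact hsum

lemma bdd_inner (A : Set ℤ) (m : ℤ) (r : ℕ) :
    BddAbove (Set.range fun s => avg (chi A) r s m) :=
  ⟨1, by rintro x ⟨s, rfl⟩; exact avg_chi_le_one A r s m⟩

lemma bdd_outer (A : Set ℤ) (m : ℤ) :
    BddAbove (Set.range fun r => ⨆ s, avg (chi A) r s m) :=
  ⟨1, by rintro x ⟨r, rfl⟩; exact ciSup_le fun s => avg_chi_le_one A r s m⟩

lemma avg_le_M (A : Set ℤ) (r s : ℕ) (m : ℤ) : avg (chi A) r s m ≤ M (chi A) m := by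
  have h1 : avg (chi A) r s m ≤ ⨆ s, avg (chi A) r s m := le_ciSup (bdd_inner A m r) s
  exact h1.trans (le_ciSup (bdd_outer A m) r)

lemma M_nonneg (A : Set ℤ) (m : ℤ) : 0 ≤ M (chi A) m :=
  (avg_nonneg _ 0 0 m).trans (avg_le_M A 0 0 m)

lemma avg_shift (f : ℤ → ℝ) (r s : ℕ) (n : ℤ) :
    avg f (r + 1) s n = avg f r (s + 1) (n - 1) := by
  unfold avg
  have hmap : Finset.Icc (-(r : ℤ)) ((s : ℤ) + 1) =
      (Finset.Icc (-((r : ℤ) + 1)) (s : ℤ)).map (addRightEmbedding 1) := by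
    rw [Finset.map_add_right_Icc]; congr 1 <;> ring
  have hsum : ∑ j ∈ Finset.Icc (-((r : ℤ) + 1)) (s : ℤ), |f (n + j)| =
      ∑ j ∈ Finset.Icc (-(r : ℤ)) ((s : ℤ) + 1), |f (n - 1 + j)| := by
    rw [hmap, Finset.sum_map]
    apply Finset.sum_congr rfl
    intro j _
    simp only [addRightEmbedding_apply]
    congr 1
    ring
  push_cast
  rw [hsum]
  congr 1
  ring

lemma sum_Icc_to_range (g : ℤ → ℝ) (s : ℕ) :
    ∑ j ∈ Finset.Icc (0 : ℤ) (s : ℤ), g j = ∑ j ∈ Finset.range (s + 1), g (j : ℤ) := by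
  induction s with
  | zero => simp
  | succ k ih =>
    have hins : Finset.Icc (0 : ℤ) ((k : ℤ) + 1) = insert ((k : ℤ) + 1) (Finset.Icc (0 : ℤ) (k : ℤ)) := by
      ext x
      simp only [Finset.mem_Icc, Finset.mem_insert]
      omega
    push_cast
    rw [hins, Finset.sum_insert (by simp), ih]
    conv_rhs => rw [show k + 1 + 1 = (k+1) + 1 from rfl, Finset.sum_range_succ]
    push_cast
    ring

lemma avg_compare (A : Set ℤ) (s : ℕ) (n : ℤ) :
    avg (chi A) 0 s n ≤ M (chi A) (n - 1) + M (chi A) (n - 1) / (s + 1) := by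
  have key : ∑ j ∈ Finset.Icc (0 : ℤ) (s : ℤ), |chi A (n + j)| ≤
      ∑ j ∈ Finset.Icc (0 : ℤ) ((s : ℤ) + 1), |chi A (n - 1 + j)| := by
    have hmap : Finset.Icc (1 : ℤ) ((s : ℤ) + 1) =
        (Finset.Icc (0 : ℤ) (s : ℤ)).map (addRightEmbedding 1) := by
      rw [Finset.map_add_right_Icc]; norm_num
    have h1 : ∑ j ∈ Finset.Icc (0 : ℤ) (s : ℤ), |chi A (n + j)| =
        ∑ j ∈ Finset.Icc (1 : ℤ) ((s : ℤ) + 1), |chi A (n - 1 + j)| := by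
      rw [hmap, Finset.sum_map]
      apply Finset.sum_congr rfl
      intro j _
      simp only [addRightEmbedding_apply]
      congr 1
      ring
    rw [h1]
    apply Finset.sum_le_sum_of_subset_of_nonneg
    · apply Finset.Icc_subset_Icc_left; norm_num
    · intro j _ _; exact abs_nonneg _
  have h2 : avg (chi A) 0 s n ≤ ((s : ℝ) + 2) / ((s : ℝ) + 1) * avg (chi A) 0 (s + 1) (n - 1) := by
    unfold avg
    simp only [Nat.cast_zero, neg_zero, Nat.cast_add, Nat.cast_one, zero_add]
    rw [← mul_assoc]
    have e : ((s : ℝ) + 2) / ((s : ℝ) + 1) * (1 / ((s : ℝ) + 1 + 1)) = 1 / ((s : ℝ) + 1) := by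
      field_simp
      ring
    rw [e]
    exact mul_le_mul_of_nonneg_left key (by positivity)
  have h3 : avg (chi A) 0 (s + 1) (n - 1) ≤ M (chi A) (n - 1) := avg_le_M A 0 (s+1) (n-1)
  have h4 : ((s : ℝ) + 2) / ((s : ℝ) + 1) * avg (chi A) 0 (s + 1) (n - 1) ≤
      ((s : ℝ) + 2) / ((s : ℝ) + 1) * M (chi A) (n - 1) := by
    apply mul_le_mul_of_nonneg_left h3 (by positivity)
  have hM := M_nonneg A (n - 1)
  calc avg (chi A) 0 s n ≤ ((s : ℝ) + 2) / ((s : ℝ) + 1) * M (chi A) (n - 1) := h2.trans h4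
    _ = M (chi A) (n - 1) + M (chi A) (n - 1) / (s + 1) := by field_simp; ring

theorem sup_attained_one_sided (A : Set ℤ) (hA : A.Nonempty) (hAc : Aᶜ.Nonempty) (n : ℤ)
    (h : M (chi A) (n - 1) < M (chi A) n) :
    ∃ s : ℕ, M (chi A) n = avg (chi A) 0 s n ∧
      M (chi A) n = (1 / (s + 1 : ℝ)) * ∑ j ∈ Finset.range (s + 1), chi A (n + j) := by
  set a := M (chi A) (n - 1) with ha
  set b := M (chi A) n with hb
  have ha0 : 0 ≤ a := M_nonneg A (n - 1)
  -- choose S with a / (S+1) < b - a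
  obtain ⟨S, hS⟩ := exists_nat_gt (a / (b - a))
  have hba : (0 : ℝ) < b - a := by linarith
  have hSa : a / ((S : ℝ) + 1) < b - a := by
    rw [div_lt_iff₀ (by positivity)]
    rw [div_lt_iff₀ hba] at hS
    nlinarith
  -- large s: avg small
  have hlarge : ∀ s : ℕ, S ≤ s → avg (chi A) 0 s n < b := by
    intro s hs
    have h1 := avg_compare A s n
    have h2 : a / ((s : ℝ) + 1) ≤ a / ((S : ℝ) + 1) := by
      apply div_le_div_of_nonneg_left ha0 (by positivity)
      have : (S : ℝ) ≤ s := by exact_mod_cast hs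
      linarith
    calc avg (chi A) 0 s n ≤ a + a / ((s : ℝ) + 1) := h1
      _ ≤ a + a / ((S : ℝ) + 1) := by linarith
      _ < b := by linarith
  -- the finite max
  have hne : ((Finset.range (S + 1)).image (fun s => avg (chi A) 0 s n)).Nonempty :=
    (Finset.nonempty_range_iff.mpr (by omega)).image _
  obtain ⟨s₀, hs₀mem, hs₀⟩ := Finset.mem_image.mp (Finset.max'_mem ((Finset.range (S + 1)).image (fun s => avg (chi A) 0 s n)) hne)
  have hmaxle : ∀ s ∈ Finset.range (S + 1), avg (chi A) 0 s n ≤ avg (chi A) 0 s₀ n := by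
    intro s hs
    rw [hs₀]
    exact Finset.le_max' ((Finset.range (S + 1)).image (fun s => avg (chi A) 0 s n)) _ (Finset.mem_image.mpr ⟨s, hs, rfl⟩)
  set m := avg (chi A) 0 s₀ n with hm
  set c := a + a / ((S : ℝ) + 1) with hc
  have hcb : c < b := by rw [hc]; linarith
  have hca : a ≤ c := by
    have : 0 ≤ a / ((S : ℝ) + 1) := by positivity
    rw [hc]; linarith
  have hle : ∀ r s : ℕ, avg (chi A) r s n ≤ max m c := by
    intro r s
    match r with
    | 0 =>
      rcases le_or_gt s S with hsS | hsS
      · exact le_trans (hmaxle s (Finset.mem_range.mpr (by omega))) (le_max_left _ _)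
      · refine le_trans ?_ (le_max_right _ _)
        have h1 := avg_compare A s n
        have h2 : a / ((s : ℝ) + 1) ≤ a / ((S : ℝ) + 1) := by
          apply div_le_div_of_nonneg_left ha0 (by positivity)
          have : (S : ℝ) ≤ s := by exact_mod_cast hsS.le
          linarith
        rw [hc]; rw [← ha] at h1; linarith
    | r + 1 =>
      refine le_trans ?_ (le_max_right _ _)
      rw [avg_shift]
      have h3 : avg (chi A) r (s + 1) (n - 1) ≤ a := avg_le_M A r (s + 1) (n - 1)
      linarith
  have hbm : b ≤ max m c := by
    rw [hb]
    unfold M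
    exact ciSup_le fun r => ciSup_le fun s => hle r s
  have hbm' : b ≤ m := by
    rcases max_cases m c with ⟨heq, _⟩ | ⟨heq, _⟩
    · rwa [heq] at hbm
    · rw [heq] at hbm; linarith
  have hmb : m ≤ b := avg_le_M A 0 s₀ n
  have hbeq : b = avg (chi A) 0 s₀ n := le_antisymm hbm' hmb
  refine ⟨s₀, hbeq, ?_⟩
  rw [hbeq]
  unfold avg
  have hsum : ∑ j ∈ Finset.Icc (0 : ℤ) (s₀ : ℤ), |chi A (n + j)| =
      ∑ j ∈ Finset.range (s₀ + 1), chi A (n + j) := by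
    rw [sum_Icc_to_range (fun j => |chi A (n + j)|) s₀]
    exact Finset.sum_congr rfl fun j _ => abs_chi A _
  simp only [Nat.cast_zero, neg_zero, zero_add]
  rw [hsum]
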